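/- If (k₃', k₄', k₅') ∈ K(1) and c > 1, then (c·k₃', c²·k₄', c·k₅') ∈ K(c). -/
import Mathlib

/-- The set `K(c)` of admissible gains from the paper. -/
def Kset (c : ℝ) : Set (ℝ × ℝ × ℝ) :=
  {k | k.2.2 > c ∧ k.1 > 0 ∧
    k.2.1^2 - 2*k.1*k.2.2 - 2*k.1^2*k.2.2^2 > 0 ∧
    k.1^2*k.2.1 - k.1*k.2.2 - k.2.1^2 > 0 ∧
    k.1^2*k.2.1^2 - k.1^3*k.2.2 - k.2.1^3 > 0 ∧
    k.1^2 - 2*k.2.1 - 2*k.2.2^2 > 0}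

/-- If `(k₃', k₄', k₅') ∈ K(1)` and `c > 1`, then `(c·k₃', c²·k₄', c·k₅') ∈ K(c)`. -/
theorem stmt7 (k3' k4' k5' c : ℝ) (hm : (k3', k4', k5') ∈ Kset 1) (hc : 1 < c) :
    (c * k3', c^2 * k4', c * k5') ∈ Kset c := by
  obtain ⟨h1, h2, h3, h4, h5, h6⟩ := hm
  simp only [Kset, Set.mem_setOf_eq] at *
  have hc0 : (0:ℝ) < c := by linarith
  have hk35 : 0 < k3' * k5' := by positivity
  have hc2 : c^2 ≤ c^4 := pow_le_pow_right₀ (by linarith) (by norm_num)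
  have hc46 : c^4 ≤ c^6 := pow_le_pow_right₀ (by linarith) (by norm_num)
  refine ⟨by nlinarith, by positivity, ?_, ?_, ?_, ?_⟩
  · nlinarith [mul_pos (pow_pos hc0 4) h3, mul_nonneg (sub_nonneg.2 hc2) hk35.le]
  · nlinarith [mul_pos (pow_pos hc0 4) h4, mul_nonneg (sub_nonneg.2 hc2) hk35.le]
  · have : 0 < k3'^3 * k5' := by positivity
    nlinarith [mul_pos (pow_pos hc0 6) h5, mul_nonneg (sub_nonneg.2 hc46) this.le]
  · nlinarith [mul_pos (pow_pos hc0 2) h6]
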